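/- arXiv:1807.10489 — 7 statements merged into one kernel-verified Lean document; each statement's English description precedes it below -/
import Mathlib

section
/- Let K ≥ 3 be an integer and let w > √e be a real number. If Q is a random variable with the chi-squared distribution with K degrees of freedom, then the probability that Q lies outside the interval [K·w⁻², K·w²] is at most (√e/w)^K, i.e. P(Q < K·w⁻² or Q > K·w²) ≤ (√e/w)^K. -/
open MeasureTheory ProbabilityTheory Real

/-- The chi-squared distribution with `K` degrees of freedom: the Gamma distribution with
shape parameter `K/2` and rate parameter `1/2`. -/
noncomputable def chiSquaredMeasure (K : ℕ) : Measure ℝ :=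
  gammaMeasure ((K : ℝ) / 2) (1 / 2)

/-!
Chernoff bounds by exponential tilting: the Gamma(a, r) density is `(r / r') ^ a * exp ((r' - r) x)`
times the Gamma(a, r') density, and on a suitable half-line that factor is largest at the endpoint.
With `r' = 1 / (2z)` this bounds each tail of `χ²(K)` at `K z` by `(z * exp (1 - z)) ^ (K / 2)`.
For `z = t⁻¹` and `z = t`, `t = w²`, the two bounds add up to `(e / t) ^ (K / 2)` times
`exp (-t⁻¹) ^ (K / 2) + (t² exp (-t)) ^ (K / 2)`, and for `K ≥ 3`, `t ≥ 2` this factor is at most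
`exp (-u) + t³ exp (-3t / 2) ≤ 1 / (1 + u + u² / 2) + 1 / t ≤ 1`, where `u = 3 / (2t)`.
-/

open Set

theorem gammaPDF_eq_mul_gammaPDF {a r r' : ℝ} (hr : 0 ≤ r) (hr' : 0 < r') (x : ℝ) :
    gammaPDF a r x = ENNReal.ofReal ((r / r') ^ a * exp ((r' - r) * x)) * gammaPDF a r' x := by
  rcases lt_or_ge x 0 with hx | hx
  · simp [gammaPDF_of_neg hx]
  rw [gammaPDF_of_nonneg hx, gammaPDF_of_nonneg hx, ← ENNReal.ofReal_mul (by positivity)]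
  congr 1
  rw [div_rpow hr hr'.le]
  have hexp : exp (-(r * x)) = exp ((r' - r) * x) * exp (-(r' * x)) := by
    rw [← exp_add]; ring_nf
  rw [hexp]
  field_simp [(rpow_pos_of_pos hr' a).ne']

theorem gammaMeasure_le_of_forall_exp_le {a r r' C : ℝ} (ha : 0 < a) (hr : 0 ≤ r) (hr' : 0 < r')
    {s : Set ℝ} (hs : MeasurableSet s) (hC : ∀ x ∈ s, exp ((r' - r) * x) ≤ C) :
    gammaMeasure a r s ≤ ENNReal.ofReal ((r / r') ^ a * C) := by
  have hmeas : Measurable (gammaPDF a r') := (measurable_gammaPDFReal a r').ennreal_ofReal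
  have hpdf : ∀ x ∈ s, gammaPDF a r x ≤ ENNReal.ofReal ((r / r') ^ a * C) * gammaPDF a r' x := by
    intro x hx
    rw [gammaPDF_eq_mul_gammaPDF hr hr' x]
    gcongr
    exact hC x hx
  calc gammaMeasure a r s = ∫⁻ x in s, gammaPDF a r x := withDensity_apply _ hs
    _ ≤ ∫⁻ x in s, ENNReal.ofReal ((r / r') ^ a * C) * gammaPDF a r' x :=
        setLIntegral_mono (hmeas.const_mul _) hpdf
    _ ≤ ∫⁻ x, ENNReal.ofReal ((r / r') ^ a * C) * gammaPDF a r' x :=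
        setLIntegral_le_lintegral _ _
    _ = ENNReal.ofReal ((r / r') ^ a * C) := by
        rw [lintegral_const_mul _ hmeas, lintegral_gammaPDF_eq_one ha hr', mul_one]

theorem gammaMeasure_Iio_le {a r r' : ℝ} (ha : 0 < a) (hr : 0 < r) (hrr' : r ≤ r') (c : ℝ) :
    gammaMeasure a r (Iio c) ≤ ENNReal.ofReal ((r / r') ^ a * exp ((r' - r) * c)) :=
  gammaMeasure_le_of_forall_exp_le ha hr.le (hr.trans_le hrr') measurableSet_Iio fun _ hx ↦
    exp_le_exp.2 (mul_le_mul_of_nonneg_left (le_of_lt hx) (sub_nonneg.2 hrr'))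

theorem gammaMeasure_Ioi_le {a r r' : ℝ} (ha : 0 < a) (hr' : 0 < r') (hr'r : r' ≤ r) (c : ℝ) :
    gammaMeasure a r (Ioi c) ≤ ENNReal.ofReal ((r / r') ^ a * exp ((r' - r) * c)) :=
  gammaMeasure_le_of_forall_exp_le ha (hr'.le.trans hr'r) hr' measurableSet_Ioi fun _ hx ↦
    exp_le_exp.2 (mul_le_mul_of_nonpos_left (le_of_lt hx) (sub_nonpos.2 hr'r))

theorem sq_mul_exp_neg_le_one {t : ℝ} (ht : 0 ≤ t) : t ^ 2 * exp (-t) ≤ 1 := by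
  have h := mul_exp_neg_le_exp_neg_one (t / 2)
  have h0 : 0 ≤ t / 2 * exp (-(t / 2)) := by positivity
  calc t ^ 2 * exp (-t) = 4 * (t / 2 * exp (-(t / 2))) ^ 2 := by
        rw [mul_pow, ← exp_nat_mul]; ring_nf
    _ ≤ 4 * (1 / 2) ^ 2 := by gcongr; linarith [exp_neg_one_lt_half]
    _ = 1 := by norm_num

theorem pow_three_mul_exp_neg_le_inv {t : ℝ} (ht : 0 < t) : t ^ 3 * exp (-(3 / 2 * t)) ≤ t⁻¹ := by
  have h : t * exp (-(3 / 8 * t)) ≤ 8 / 3 * exp (-1) := by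
    linarith [mul_exp_neg_le_exp_neg_one (3 / 8 * t)]
  have h1 : t * exp (-(3 / 8 * t)) ≤ 1 := by linarith [exp_neg_one_lt_d9]
  have h4 : t ^ 3 * exp (-(3 / 2 * t)) * t = (t * exp (-(3 / 8 * t))) ^ 4 := by
    rw [mul_pow, ← exp_nat_mul]; ring_nf
  rw [← one_div, le_div_iff₀ ht, h4]
  exact pow_le_one₀ (by positivity) h1

theorem exp_neg_le_inv_quadratic {u : ℝ} (hu : 0 ≤ u) : exp (-u) ≤ (1 + u + u ^ 2 / 2)⁻¹ := by
  rw [exp_neg]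
  exact inv_anti₀ (by positivity) (quadratic_le_exp_of_nonneg hu)

theorem exp_neg_inv_rpow_add_sq_mul_exp_neg_rpow_le_one {t p : ℝ} (ht : 2 ≤ t) (hp : 3 / 2 ≤ p) :
    exp (-t⁻¹) ^ p + (t ^ 2 * exp (-t)) ^ p ≤ 1 := by
  have ht0 : 0 < t := by linarith
  have hB : exp (-t⁻¹) ^ p ≤ (1 + 3 / 2 * t⁻¹ + (3 / 2 * t⁻¹) ^ 2 / 2)⁻¹ :=
    calc exp (-t⁻¹) ^ p ≤ exp (-t⁻¹) ^ (3 / 2 : ℝ) :=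
          rpow_le_rpow_of_exponent_ge (exp_pos _) (exp_le_one_iff.2 (by simp [ht0.le])) hp
      _ = exp (-(3 / 2 * t⁻¹)) := by rw [← exp_mul]; ring_nf
      _ ≤ _ := exp_neg_le_inv_quadratic (by positivity)
  have hA : (t ^ 2 * exp (-t)) ^ p ≤ t⁻¹ :=
    calc (t ^ 2 * exp (-t)) ^ p ≤ (t ^ 2 * exp (-t)) ^ (3 / 2 : ℝ) :=
          rpow_le_rpow_of_exponent_ge (by positivity) (sq_mul_exp_neg_le_one ht0.le) hp
      _ = t ^ 3 * exp (-(3 / 2 * t)) := by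
          rw [mul_rpow (by positivity) (exp_pos _).le, ← exp_mul, ← rpow_natCast,
            ← rpow_mul ht0.le]
          congr 1
          · norm_num
          · ring_nf
      _ ≤ t⁻¹ := pow_three_mul_exp_neg_le_inv ht0
  have hpoly : 1 - (t⁻¹ + (1 + 3 / 2 * t⁻¹ + (3 / 2 * t⁻¹) ^ 2 / 2)⁻¹)
      = (4 * t ^ 2 - 3 * t - 9) / (t * (8 * t ^ 2 + 12 * t + 9)) := by
    field_simp; ring
  have hnum : 0 ≤ (4 * t ^ 2 - 3 * t - 9) / (t * (8 * t ^ 2 + 12 * t + 9)) :=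
    div_nonneg (by nlinarith) (by positivity)
  linarith

theorem inv_mul_exp_rpow_add_mul_exp_rpow_le {t p : ℝ} (ht : 2 ≤ t) (hp : 3 / 2 ≤ p) :
    (t⁻¹ * exp (1 - t⁻¹)) ^ p + (t * exp (1 - t)) ^ p ≤ (exp 1 / t) ^ p := by
  have ht0 : 0 < t := by linarith
  have h₁ : t⁻¹ * exp (1 - t⁻¹) = exp 1 / t * exp (-t⁻¹) := by
    rw [sub_eq_add_neg, exp_add]; ring
  have h₂ : t * exp (1 - t) = exp 1 / t * (t ^ 2 * exp (-t)) := by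
    rw [sub_eq_add_neg, exp_add]; field_simp
  rw [h₁, h₂, mul_rpow (by positivity) (by positivity), mul_rpow (by positivity) (by positivity),
    ← mul_add]
  exact mul_le_of_le_one_right (by positivity)
    (exp_neg_inv_rpow_add_sq_mul_exp_neg_rpow_le_one ht hp)

theorem chiSquared_chernoff_bound_eq (K : ℕ) {z : ℝ} (hz : 0 < z) :
    ((1 / 2) / (2 * z)⁻¹) ^ ((K : ℝ) / 2) * exp (((2 * z)⁻¹ - 1 / 2) * (K * z))
      = (z * exp (1 - z)) ^ ((K : ℝ) / 2) := by
  have hr : (1 / 2) / (2 * z)⁻¹ = z := by field_simp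
  have he : ((2 * z)⁻¹ - 1 / 2) * (K * z) = (1 - z) * ((K : ℝ) / 2) := by field_simp
  rw [hr, he, exp_mul, mul_rpow hz.le (exp_pos _).le]

theorem chiSquaredMeasure_Iio_le {K : ℕ} (hK : 0 < K) {z : ℝ} (hz0 : 0 < z) (hz1 : z ≤ 1) :
    chiSquaredMeasure K (Iio (K * z)) ≤ ENNReal.ofReal ((z * exp (1 - z)) ^ ((K : ℝ) / 2)) := by
  rw [← chiSquared_chernoff_bound_eq K hz0]
  refine gammaMeasure_Iio_le (by positivity) (by norm_num) ?_ _
  rw [le_inv_comm₀ (by norm_num) (by positivity)]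
  linarith

theorem chiSquaredMeasure_Ioi_le {K : ℕ} (hK : 0 < K) {z : ℝ} (hz : 1 ≤ z) :
    chiSquaredMeasure K (Ioi (K * z)) ≤ ENNReal.ofReal ((z * exp (1 - z)) ^ ((K : ℝ) / 2)) := by
  rw [← chiSquared_chernoff_bound_eq K (by positivity)]
  refine gammaMeasure_Ioi_le (by positivity) (by positivity) ?_ _
  rw [inv_le_comm₀ (by positivity) (by norm_num)]
  linarith

theorem chiSq_two_sided_tail_bound_general
    {Ω : Type*} [MeasurableSpace Ω] (P : Measure Ω)
    (K : ℕ) (hK : 3 ≤ K) (w : ℝ) (hw : Real.sqrt (Real.exp 1) < w)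
    (Q : Ω → ℝ) (hQ : Measurable Q) (hlaw : P.map Q = chiSquaredMeasure K) :
    P {ω | Q ω < (K : ℝ) * w⁻¹ ^ 2 ∨ (K : ℝ) * w ^ 2 < Q ω}
      ≤ ENNReal.ofReal ((Real.sqrt (Real.exp 1) / w) ^ K) := by
  have hw0 : 0 < w := (sqrt_nonneg _).trans_lt hw
  have ht : 2 ≤ w ^ 2 := by linarith [(sqrt_lt' hw0).1 hw, exp_one_gt_d9]
  have hK0 : 0 < K := by omega
  have hset : {ω | Q ω < (K : ℝ) * w⁻¹ ^ 2 ∨ (K : ℝ) * w ^ 2 < Q ω}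
      = Q ⁻¹' (Iio ((K : ℝ) * (w ^ 2)⁻¹) ∪ Ioi ((K : ℝ) * w ^ 2)) := by
    ext ω; simp [inv_pow]
  have hbound : (exp 1 / w ^ 2) ^ ((K : ℝ) / 2) = (sqrt (exp 1) / w) ^ K := by
    rw [rpow_div_two_eq_sqrt _ (by positivity), sqrt_div' _ (by positivity), sqrt_sq hw0.le,
      rpow_natCast]
  rw [hset, ← Measure.map_apply hQ (measurableSet_Iio.union measurableSet_Ioi), hlaw, ← hbound]
  calc chiSquaredMeasure K (Iio (K * (w ^ 2)⁻¹) ∪ Ioi (K * w ^ 2))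
      ≤ chiSquaredMeasure K (Iio (K * (w ^ 2)⁻¹)) + chiSquaredMeasure K (Ioi (K * w ^ 2)) :=
        measure_union_le _ _
    _ ≤ ENNReal.ofReal (((w ^ 2)⁻¹ * exp (1 - (w ^ 2)⁻¹)) ^ ((K : ℝ) / 2))
          + ENNReal.ofReal ((w ^ 2 * exp (1 - w ^ 2)) ^ ((K : ℝ) / 2)) :=
        add_le_add
          (chiSquaredMeasure_Iio_le hK0 (by positivity) (inv_le_one_of_one_le₀ (by linarith)))
          (chiSquaredMeasure_Ioi_le hK0 (by linarith))
    _ = ENNReal.ofReal (((w ^ 2)⁻¹ * exp (1 - (w ^ 2)⁻¹)) ^ ((K : ℝ) / 2)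
          + (w ^ 2 * exp (1 - w ^ 2)) ^ ((K : ℝ) / 2)) :=
        (ENNReal.ofReal_add (by positivity) (by positivity)).symm
    _ ≤ ENNReal.ofReal ((exp 1 / w ^ 2) ^ ((K : ℝ) / 2)) := by
        refine ENNReal.ofReal_le_ofReal (inv_mul_exp_rpow_add_mul_exp_rpow_le ht ?_)
        have hK3 : (3 : ℝ) ≤ K := by exact_mod_cast hK
        linarith

theorem chiSq_two_sided_tail_bound
    {Ω : Type*} [MeasurableSpace Ω] (P : Measure Ω) [IsProbabilityMeasure P]
    (K : ℕ) (hK : 3 ≤ K) (w : ℝ) (hw : Real.sqrt (Real.exp 1) < w)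
    (Q : Ω → ℝ) (hQ : Measurable Q) (hlaw : P.map Q = chiSquaredMeasure K) :
    P {ω | Q ω < (K : ℝ) * w⁻¹ ^ 2 ∨ (K : ℝ) * w ^ 2 < Q ω}
      ≤ ENNReal.ofReal ((Real.sqrt (Real.exp 1) / w) ^ K) :=
  chiSq_two_sided_tail_bound_general P K hK w hw Q hQ hlaw
end

section
/- Let K ≥ 2 be an integer and let w > 0 be a real number. If Q is a random variable with the chi-squared distribution with K degrees of freedom, then P(Q ≤ K·w⁻²) ≤ (1/2)·(√e/w)^K. -/
open MeasureTheory ProbabilityTheory Real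

/-!
Dropping the factor `exp (-r x) ≤ 1` from the Gamma(a, r) density gives
`P(Q ≤ t) ≤ (r t)^a / Γ(a+1)`. For `a = K/2`, `r = 1/2`, `t = K/w²` this equals
`ρ(a) (√e/w)^K` with `ρ(a) = (a/e)^a / Γ(a+1)`. Since `Γ(a+2) = (a+1) Γ(a+1)` and
`(1 + 1/a)^a ≤ e`, `ρ(a+1) ≤ ρ(a)`, so `ρ(K/2)` is at most `ρ(1) = 1/e` or `ρ(3/2) < 1/2`.
-/

open Set

lemma one_add_inv_rpow_le_exp {a : ℝ} (ha : 0 < a) : (1 + a⁻¹) ^ a ≤ exp 1 :=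
  calc (1 + a⁻¹) ^ a ≤ exp a⁻¹ ^ a := by
        gcongr
        linarith [add_one_le_exp a⁻¹]
    _ = exp 1 := by rw [← exp_mul, inv_mul_cancel₀ ha.ne']

noncomputable def stirlingGammaRatio (a : ℝ) : ℝ := (a / exp 1) ^ a / Gamma (a + 1)

lemma stirlingGammaRatio_add_one_le {a : ℝ} (ha : 0 < a) :
    stirlingGammaRatio (a + 1) ≤ stirlingGammaRatio a := by
  have hsplit : (a + 1) / exp 1 = (1 + a⁻¹) * (a / exp 1) := by field_simp
  calc stirlingGammaRatio (a + 1)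
      = (1 + a⁻¹) ^ a * (a / exp 1) ^ a / (exp 1 * Gamma (a + 1)) := by
        rw [stirlingGammaRatio, Gamma_add_one (by positivity), rpow_add_one (by positivity),
          hsplit, mul_rpow (by positivity) (by positivity)]
        field_simp
    _ ≤ exp 1 * (a / exp 1) ^ a / (exp 1 * Gamma (a + 1)) := by
        gcongr
        exact one_add_inv_rpow_le_exp ha
    _ = stirlingGammaRatio a := by
        rw [stirlingGammaRatio, mul_div_mul_left _ _ (exp_pos 1).ne']

lemma stirlingGammaRatio_add_nat_le {a : ℝ} (ha : 0 < a) (n : ℕ) :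
    stirlingGammaRatio (a + n) ≤ stirlingGammaRatio a := by
  induction n with
  | zero => simp
  | succ n ih =>
    rw [Nat.cast_succ, ← add_assoc]
    exact (stirlingGammaRatio_add_one_le (by positivity)).trans ih

lemma stirlingGammaRatio_one : stirlingGammaRatio 1 = (exp 1)⁻¹ := by
  simp [stirlingGammaRatio, one_add_one_eq_two]

lemma stirlingGammaRatio_three_halves_le : stirlingGammaRatio (3 / 2) ≤ 1 / 2 := by
  have hG : Gamma (3 / 2 + 1) = 3 / 4 * √π := by
    rw [show (3 / 2 : ℝ) = 1 / 2 + 1 by norm_num, Gamma_add_one (by norm_num),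
      Gamma_add_one (by norm_num), Gamma_one_half_eq]
    ring
  have he : 2.7 < exp 1 := by linarith [exp_one_gt_d9]
  have hpi : 1.6 < √π := by
    rw [lt_sqrt (by norm_num)]
    linarith [pi_gt_three]
  have hx : 3 / 2 / exp 1 ≤ 1 := by
    rw [div_le_one (exp_pos 1)]
    linarith
  calc stirlingGammaRatio (3 / 2) ≤ 3 / 2 / exp 1 / (3 / 4 * √π) := by
        rw [stirlingGammaRatio, hG]
        gcongr
        exact rpow_le_self_of_le_one (by positivity) hx (by norm_num)
    _ ≤ 1 / 2 := by
        rw [div_div, div_le_div_iff₀ (by positivity) (by norm_num)]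
        nlinarith

lemma stirlingGammaRatio_half_nat_le {K : ℕ} (hK : 2 ≤ K) :
    stirlingGammaRatio ((K : ℝ) / 2) ≤ 1 / 2 := by
  obtain ⟨n, rfl | rfl⟩ := Nat.even_or_odd' K
  · obtain ⟨m, rfl⟩ := Nat.exists_eq_add_of_le' (show 1 ≤ n by omega)
    calc stirlingGammaRatio (((2 * (m + 1) : ℕ) : ℝ) / 2)
        = stirlingGammaRatio (1 + m) := by push_cast; ring_nf
      _ ≤ (exp 1)⁻¹ := stirlingGammaRatio_one ▸ stirlingGammaRatio_add_nat_le one_pos m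
      _ ≤ 1 / 2 := by
        rw [inv_le_comm₀ (exp_pos 1) (by norm_num)]
        linarith [exp_one_gt_d9]
  · obtain ⟨m, rfl⟩ := Nat.exists_eq_add_of_le' (show 1 ≤ n by omega)
    calc stirlingGammaRatio (((2 * (m + 1) + 1 : ℕ) : ℝ) / 2)
        = stirlingGammaRatio (3 / 2 + m) := by push_cast; ring_nf
      _ ≤ 1 / 2 := (stirlingGammaRatio_add_nat_le (by norm_num) m).trans
          stirlingGammaRatio_three_halves_le

lemma gammaMeasure_Iic_le {a r t : ℝ} (ha : 0 < a) (hr : 0 ≤ r) (ht : 0 ≤ t) :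
    gammaMeasure a r (Iic t) ≤ ENNReal.ofReal ((r * t) ^ a / Gamma (a + 1)) := by
  have hc : 0 ≤ r ^ a / Gamma a := div_nonneg (by positivity) (Gamma_pos_of_pos ha).le
  have hdens : ∀ x ∈ Icc 0 t,
      gammaPDF a r x ≤ ENNReal.ofReal (r ^ a / Gamma a * x ^ (a - 1)) := by
    intro x hx
    rw [gammaPDF_of_nonneg hx.1]
    refine ENNReal.ofReal_le_ofReal (mul_le_of_le_one_right ?_ (exp_le_one_iff.mpr ?_))
    · exact mul_nonneg hc (rpow_nonneg hx.1 _)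
    · nlinarith [hx.1]
  have hint : ∫ x in Icc 0 t, r ^ a / Gamma a * x ^ (a - 1) = (r * t) ^ a / Gamma (a + 1) := by
    rw [integral_Icc_eq_integral_Ioc, ← intervalIntegral.integral_of_le ht,
      intervalIntegral.integral_const_mul, integral_rpow (by left; linarith), sub_add_cancel,
      zero_rpow ha.ne', sub_zero, Gamma_add_one ha.ne', mul_rpow hr ht]
    field_simp
  calc gammaMeasure a r (Iic t) = ∫⁻ x in Icc 0 t, gammaPDF a r x := by
        rw [gammaMeasure, withDensity_apply _ measurableSet_Iic,
          lintegral_Iic_eq_lintegral_Iio_add_Icc _ ht, lintegral_gammaPDF_of_nonpos le_rfl,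
          zero_add]
    _ ≤ ∫⁻ x in Icc 0 t, ENNReal.ofReal (r ^ a / Gamma a * x ^ (a - 1)) :=
        setLIntegral_mono' measurableSet_Icc hdens
    _ = ENNReal.ofReal ((r * t) ^ a / Gamma (a + 1)) := by
        rw [← hint, ofReal_integral_eq_lintegral_ofReal]
        · have hrpow : IntegrableOn (fun x : ℝ ↦ x ^ (a - 1)) (Icc 0 t) := by
            rw [integrableOn_Icc_iff_integrableOn_Ioc,
              ← intervalIntegrable_iff_integrableOn_Ioc_of_le ht]
            exact intervalIntegral.intervalIntegrable_rpow' (by linarith)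
          exact hrpow.const_mul _
        · filter_upwards [ae_restrict_mem measurableSet_Icc] with x hx
          exact mul_nonneg hc (rpow_nonneg hx.1 _)

theorem chiSq_lower_tail_bound_general
    {Ω : Type*} [MeasurableSpace Ω] (P : Measure Ω)
    (K : ℕ) (hK : 2 ≤ K) (w : ℝ) (hw : 0 < w)
    (Q : Ω → ℝ) (hQ : Measurable Q) (hlaw : P.map Q = chiSquaredMeasure K) :
    P {ω | Q ω ≤ (K : ℝ) * w⁻¹ ^ 2}
      ≤ ENNReal.ofReal ((1 / 2) * (Real.sqrt (Real.exp 1) / w) ^ K) := by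
  set a : ℝ := (K : ℝ) / 2 with ha
  have hP : P {ω | Q ω ≤ (K : ℝ) * w⁻¹ ^ 2} =
      gammaMeasure a (1 / 2) (Iic (K * w⁻¹ ^ 2)) := by
    change P (Q ⁻¹' Iic _) = _
    rw [← Measure.map_apply hQ measurableSet_Iic, hlaw, chiSquaredMeasure]
  have hscale : 1 / 2 * (K * w⁻¹ ^ 2) = a / exp 1 * (exp 1 / w ^ 2) := by
    rw [ha]
    field_simp
  have hpow : (√(exp 1) / w) ^ K = (exp 1 / w ^ 2) ^ a := by
    rw [show exp 1 / w ^ 2 = (√(exp 1) / w) ^ 2 by rw [div_pow, sq_sqrt (exp_pos 1).le],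
      ← rpow_natCast_mul (by positivity), ha]
    push_cast
    rw [mul_div_cancel₀ _ two_ne_zero, rpow_natCast]
  rw [hP]
  refine (gammaMeasure_Iic_le (by positivity) (by norm_num) (by positivity)).trans
    (ENNReal.ofReal_le_ofReal ?_)
  calc (1 / 2 * (K * w⁻¹ ^ 2)) ^ a / Gamma (a + 1)
      = stirlingGammaRatio a * (exp 1 / w ^ 2) ^ a := by
        rw [hscale, mul_rpow (by positivity) (by positivity), stirlingGammaRatio]
        ring
    _ ≤ 1 / 2 * (exp 1 / w ^ 2) ^ a := by
        gcongr
        exact stirlingGammaRatio_half_nat_le hK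
    _ = 1 / 2 * (√(exp 1) / w) ^ K := by rw [hpow]

theorem chiSq_lower_tail_bound
    {Ω : Type*} [MeasurableSpace Ω] (P : Measure Ω) [IsProbabilityMeasure P]
    (K : ℕ) (hK : 2 ≤ K) (w : ℝ) (hw : 0 < w)
    (Q : Ω → ℝ) (hQ : Measurable Q) (hlaw : P.map Q = chiSquaredMeasure K) :
    P {ω | Q ω ≤ (K : ℝ) * w⁻¹ ^ 2}
      ≤ ENNReal.ofReal ((1 / 2) * (Real.sqrt (Real.exp 1) / w) ^ K) :=
  chiSq_lower_tail_bound_general P K hK w hw Q hQ hlaw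
end

section
/- Let K ≥ 1 be an integer and let w ≥ 1 be a real number. If Q is a random variable with the chi-squared distribution with K degrees of freedom, then P(Q ≥ K·w²) ≤ (w² · e^{1−w²})^{K/2}. -/
open MeasureTheory ProbabilityTheory Real

theorem measure_Ici_le_exp_mul_lintegral_exp (μ : Measure ℝ) {t : ℝ} (ht : 0 ≤ t)
    (ε : ℝ) :
    μ (Set.Ici ε)
      ≤ ENNReal.ofReal (exp (-t * ε)) * ∫⁻ x, ENNReal.ofReal (exp (t * x)) ∂μ := by
  have hsub : Set.Ici ε ⊆ {x | ENNReal.ofReal (exp (t * ε)) ≤ ENNReal.ofReal (exp (t * x))} :=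
    fun x hx ↦ ENNReal.ofReal_le_ofReal <| exp_le_exp.2 <| mul_le_mul_of_nonneg_left hx ht
  have hcancel : ENNReal.ofReal (exp (-t * ε)) * ENNReal.ofReal (exp (t * ε)) = 1 := by
    rw [← ENNReal.ofReal_mul (exp_nonneg _), ← exp_add, neg_mul, neg_add_cancel, exp_zero,
      ENNReal.ofReal_one]
  calc μ (Set.Ici ε)
      = ENNReal.ofReal (exp (-t * ε)) * (ENNReal.ofReal (exp (t * ε)) * μ (Set.Ici ε)) := by
        rw [← mul_assoc, hcancel, one_mul]
    _ ≤ ENNReal.ofReal (exp (-t * ε)) * ∫⁻ x, ENNReal.ofReal (exp (t * x)) ∂μ := by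
        gcongr
        exact (mul_le_mul_right (measure_mono hsub) _).trans
          (mul_meas_ge_le_lintegral₀ (by fun_prop) _)

theorem exp_mul_mul_gammaPDFReal (a : ℝ) {r t : ℝ} (hr : 0 ≤ r) (htr : t < r) (x : ℝ) :
    exp (t * x) * gammaPDFReal a r x = (r / (r - t)) ^ a * gammaPDFReal a (r - t) x := by
  have hrt : 0 < r - t := sub_pos.2 htr
  unfold gammaPDFReal
  split_ifs
  · have hexp : exp (t * x) * exp (-(r * x)) = exp (-((r - t) * x)) := by
      rw [← exp_add]; ring_nf
    have hpow : (r / (r - t)) ^ a * (r - t) ^ a = r ^ a := by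
      rw [← mul_rpow (div_nonneg hr hrt.le) hrt.le, div_mul_cancel₀ _ hrt.ne']
    rw [← hpow, ← hexp]
    ring
  · simp

theorem lintegral_exp_mul_gammaMeasure {a r t : ℝ} (ha : 0 < a) (hr : 0 ≤ r) (htr : t < r) :
    ∫⁻ x, ENNReal.ofReal (exp (t * x)) ∂gammaMeasure a r
      = ENNReal.ofReal ((r / (r - t)) ^ a) := by
  have hrt : 0 < r - t := sub_pos.2 htr
  have htilt : ∀ x, gammaPDF a r x * ENNReal.ofReal (exp (t * x))
      = ENNReal.ofReal ((r / (r - t)) ^ a) * gammaPDF a (r - t) x := fun x ↦ by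
    rw [gammaPDF, gammaPDF, ← ENNReal.ofReal_mul' (exp_nonneg _), mul_comm,
      exp_mul_mul_gammaPDFReal a hr htr,
      ENNReal.ofReal_mul (rpow_nonneg (div_nonneg hr hrt.le) _)]
  have hmeas (r : ℝ) : Measurable (gammaPDF a r) := (measurable_gammaPDFReal a r).ennreal_ofReal
  rw [gammaMeasure, lintegral_withDensity_eq_lintegral_mul _ (hmeas r) (by fun_prop)]
  simp only [Pi.mul_apply, htilt]
  rw [lintegral_const_mul _ (hmeas (r - t)), lintegral_gammaPDF_eq_one ha hrt, mul_one]

theorem gammaMeasure_Ici_le {a r t : ℝ} (ha : 0 < a) (ht : 0 ≤ t) (htr : t < r) (ε : ℝ) :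
    gammaMeasure a r (Set.Ici ε) ≤ ENNReal.ofReal (exp (-t * ε) * (r / (r - t)) ^ a) := by
  rw [ENNReal.ofReal_mul (exp_nonneg _),
    ← lintegral_exp_mul_gammaMeasure ha (ht.trans htr.le) htr]
  exact measure_Ici_le_exp_mul_lintegral_exp _ ht ε

theorem chiSquaredMeasure_Ici_le {K : ℕ} (hK : 1 ≤ K) {w : ℝ} (hw : 1 ≤ w) :
    chiSquaredMeasure K (Set.Ici (K * w ^ 2))
      ≤ ENNReal.ofReal ((w ^ 2 * exp (1 - w ^ 2)) ^ ((K : ℝ) / 2)) := by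
  have hw2 : 1 ≤ w ^ 2 := one_le_pow₀ hw
  have hw2inv : (w ^ 2)⁻¹ ≤ 1 := inv_le_one_of_one_le₀ hw2
  have hw2inv_pos : 0 < (w ^ 2)⁻¹ := by positivity
  have hK0 : (0 : ℝ) < K := by exact_mod_cast hK
  have hratio : 1 / 2 / (1 / 2 - (1 - (w ^ 2)⁻¹) / 2) = w ^ 2 := by
    field_simp
    ring
  refine (gammaMeasure_Ici_le (t := (1 - (w ^ 2)⁻¹) / 2) (by positivity) (by linarith)
    (by linarith) _).trans_eq ?_
  rw [mul_rpow (by positivity) (exp_nonneg _), ← exp_mul, hratio, mul_comm]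
  congr 3
  field_simp
  ring

theorem chiSq_upper_tail_chernoff_bound_general
    {Ω : Type*} [MeasurableSpace Ω] (P : Measure Ω)
    (K : ℕ) (hK : 1 ≤ K) (w : ℝ) (hw : 1 ≤ w)
    (Q : Ω → ℝ) (hQ : Measurable Q) (hlaw : P.map Q = chiSquaredMeasure K) :
    P {ω | (K : ℝ) * w ^ 2 ≤ Q ω}
      ≤ ENNReal.ofReal ((w ^ 2 * Real.exp (1 - w ^ 2)) ^ ((K : ℝ) / 2)) := by
  have hpre : {ω | (K : ℝ) * w ^ 2 ≤ Q ω} = Q ⁻¹' Set.Ici ((K : ℝ) * w ^ 2) := rfl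
  rw [hpre, ← Measure.map_apply hQ measurableSet_Ici, hlaw]
  exact chiSquaredMeasure_Ici_le hK hw

theorem chiSq_upper_tail_chernoff_bound
    {Ω : Type*} [MeasurableSpace Ω] (P : Measure Ω) [IsProbabilityMeasure P]
    (K : ℕ) (hK : 1 ≤ K) (w : ℝ) (hw : 1 ≤ w)
    (Q : Ω → ℝ) (hQ : Measurable Q) (hlaw : P.map Q = chiSquaredMeasure K) :
    P {ω | (K : ℝ) * w ^ 2 ≤ Q ω}
      ≤ ENNReal.ofReal ((w ^ 2 * Real.exp (1 - w ^ 2)) ^ ((K : ℝ) / 2)) :=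
  chiSq_upper_tail_chernoff_bound_general P K hK w hw Q hQ hlaw
end

section
/- For every real number a ≥ 1, the Gamma function satisfies Γ(a) ≥ 2 · a^{a−1} · e^{−a}. -/
/-!
Split the Gamma integral at `a`. On `(0, a]` bound `e^{-x}` below by `e^{-a}`, leaving
`e^{-a} ∫₀^a x^{a-1} dx = a^{a-1} e^{-a}`; on `(a, ∞)` bound `x^{a-1}` below by `a^{a-1}`
(this needs `a ≥ 1`), leaving `a^{a-1} ∫_a^∞ e^{-x} dx = a^{a-1} e^{-a}`.
-/

open MeasureTheory Set Real

theorem Real.Gamma_eq_intervalIntegral_add_integral_Ioi {s c : ℝ} (hs : 0 < s) (hc : 0 ≤ c) :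
    Gamma s = (∫ x in 0..c, exp (-x) * x ^ (s - 1)) + ∫ x in Ioi c, exp (-x) * x ^ (s - 1) := by
  have hint := GammaIntegral_convergent hs
  rw [Gamma_eq_integral hs,
    intervalIntegral.integral_interval_add_Ioi hint (hint.mono_set (Ioi_subset_Ioi hc))]

theorem Real.exp_neg_mul_rpow_div_le_intervalIntegral {s c : ℝ} (hs : 0 < s) (hc : 0 ≤ c) :
    exp (-c) * (c ^ s / s) ≤ ∫ x in 0..c, exp (-x) * x ^ (s - 1) := by
  have hpow : ∫ x in 0..c, x ^ (s - 1) = c ^ s / s := by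
    rw [integral_rpow (Or.inl (by linarith)), sub_add_cancel, zero_rpow hs.ne', sub_zero]
  rw [← hpow, ← intervalIntegral.integral_const_mul]
  refine intervalIntegral.integral_mono_on hc ?_ ?_ fun x hx => ?_
  · exact (intervalIntegral.intervalIntegrable_rpow' (by linarith)).const_mul _
  · exact (intervalIntegral.intervalIntegrable_rpow' (by linarith)).continuousOn_mul
      (continuous_exp.comp continuous_neg).continuousOn
  · exact mul_le_mul_of_nonneg_right (exp_le_exp.2 (neg_le_neg hx.2)) (rpow_nonneg hx.1 _)

theorem Real.rpow_mul_exp_neg_le_integral_Ioi {s c : ℝ} (hs : 1 ≤ s) (hc : 0 ≤ c) :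
    c ^ (s - 1) * exp (-c) ≤ ∫ x in Ioi c, exp (-x) * x ^ (s - 1) := by
  rw [← integral_exp_neg_Ioi, ← integral_const_mul]
  refine setIntegral_mono_on ?_ ?_ measurableSet_Ioi fun x hx => ?_
  · exact (integrableOn_exp_neg_Ioi c).const_mul _
  · exact (GammaIntegral_convergent (by linarith)).mono_set (Ioi_subset_Ioi hc)
  · rw [mul_comm]
    exact mul_le_mul_of_nonneg_left (rpow_le_rpow hc (le_of_lt hx) (by linarith))
      (exp_pos _).le

theorem Gamma_lower_bound (a : ℝ) (ha : 1 ≤ a) :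
    2 * a ^ (a - 1) * Real.exp (-a) ≤ Real.Gamma a := by
  have ha0 : 0 < a := by linarith
  have hinitial := Real.exp_neg_mul_rpow_div_le_intervalIntegral ha0 ha0.le
  have htail := Real.rpow_mul_exp_neg_le_integral_Ioi ha ha0.le
  rw [← Real.rpow_sub_one ha0.ne'] at hinitial
  rw [Real.Gamma_eq_intervalIntegral_add_integral_Ioi ha0 ha0.le]
  linarith
end

section
/- Let Σ ∈ ℝ^{N×N} be a symmetric positive definite matrix, let S be a finite nonempty set (of parameter values), let u : S → ℝ^N and ũ : S → ℝ^N be arbitrary functions, let 0 < δ < 1, and let w > √e. Let K be an integer with K ≥ 3 and K ≥ (log(#S) + log(δ⁻¹)) / log(w/√e). Let Z₁,…,Z_K be independent random vectors, each distributed according to the multivariate Gaussian N(0,Σ), and define the random error estimator Δ(μ) = √( (1/K) ∑_{i=1}^K (Z_iᵀ (u(μ) − ũ(μ)))² ) for μ ∈ S. Then with probability at least 1 − δ it holds simultaneously for every μ ∈ S that w⁻¹ Δ(μ) ≤ ‖u(μ) − ũ(μ)‖_Σ ≤ w Δ(μ). -/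
open MeasureTheory ProbabilityTheory Real Matrix
open scoped NNReal ENNReal

/-- The positive semidefinite square root of a positive semidefinite matrix (removed from
Mathlib; restored here with its former definition). -/
noncomputable def Matrix.PosSemidef.sqrt {n : Type*} [Fintype n] [DecidableEq n]
    {A : Matrix n n ℝ} (hA : A.PosSemidef) : Matrix n n ℝ :=
  (hA.1.eigenvectorUnitary : Matrix n n ℝ) * diagonal ((↑) ∘ (√·) ∘ hA.1.eigenvalues) *
    (star hA.1.eigenvectorUnitary : Matrix n n ℝ)

/-- The multivariate Gaussian measure `N(0, S)` on `ℝ^N` with symmetric positive definite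
covariance matrix `S`: the pushforward of the standard Gaussian product measure under
multiplication by the positive semidefinite square root of `S`. -/
noncomputable def multivariateGaussian {N : ℕ} (S : Matrix (Fin N) (Fin N) ℝ)
    (hS : S.PosDef) : Measure (Fin N → ℝ) :=
  (Measure.pi fun _ : Fin N => gaussianReal 0 1).map
    (fun z => hS.posSemidef.sqrt.mulVec z)

/-- The norm `‖v‖_S = √(vᵀ S v)` induced by a positive definite matrix `S`. -/
noncomputable def sigmaNorm {N : ℕ} (S : Matrix (Fin N) (Fin N) ℝ) (v : Fin N → ℝ) : ℝ :=
  Real.sqrt (v ⬝ᵥ S.mulVec v)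

/-!
Fix a parameter and write `v = u μ - util μ`, `σ² = vᵀ S v`. The numbers `Z i ⬝ᵥ v` are
independent `N(0, σ²)`, so `K Δ(μ)²` is `σ²` times a `χ²` variable with `K` degrees of freedom,
with moment generating function `(1 - 2tσ²)^(-K/2)`. Chernoff bounds at the levels `K w² σ²` and
`K σ² / w²` bound the probability that one of the two inequalities fails by
`((w² e^(-w²/2))^K + e^(-K/(2w²))) (√e / w)^K ≤ (√e / w)^K`, using `w² ≥ e` and `K ≥ 3`.
A union bound over the parameters and the choice of `K` bring the total below `δ`.
-/

namespace Matrix.PosSemidef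

variable {n : Type*} [Fintype n] [DecidableEq n] {A : Matrix n n ℝ}

lemma transpose_sqrt (hA : A.PosSemidef) : hA.sqrtᵀ = hA.sqrt := by
  simp only [sqrt, transpose_mul, diagonal_transpose, star_eq_conjTranspose,
    conjTranspose_eq_transpose_of_trivial, transpose_transpose, Matrix.mul_assoc]

lemma sqrt_mul_self (hA : A.PosSemidef) : hA.sqrt * hA.sqrt = A := by
  have hU : (star hA.1.eigenvectorUnitary : Matrix n n ℝ) *
      (hA.1.eigenvectorUnitary : Matrix n n ℝ) = 1 := Unitary.coe_star_mul_self _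
  have hD : diagonal (((↑) ∘ (√·) ∘ hA.1.eigenvalues : n → ℝ)) *
      diagonal ((↑) ∘ (√·) ∘ hA.1.eigenvalues) = diagonal (RCLike.ofReal ∘ hA.1.eigenvalues) := by
    rw [diagonal_mul_diagonal]
    congr 1
    funext i
    simp [Real.mul_self_sqrt (hA.eigenvalues_nonneg i)]
  conv_rhs => rw [hA.1.spectral_theorem, Unitary.conjStarAlgAut_apply]
  simp only [sqrt, Matrix.mul_assoc]
  rw [← Matrix.mul_assoc (star _) (hA.1.eigenvectorUnitary : Matrix n n ℝ), hU,
    Matrix.one_mul, ← Matrix.mul_assoc (diagonal _) (diagonal _), hD]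

lemma sqrt_mulVec_dotProduct_self (hA : A.PosSemidef) (v : n → ℝ) :
    ∑ i, (hA.sqrt *ᵥ v) i ^ 2 = v ⬝ᵥ A *ᵥ v := by
  conv_rhs => rw [← hA.sqrt_mul_self, ← mulVec_mulVec, dotProduct_mulVec, ← mulVec_transpose,
    hA.transpose_sqrt]
  simp [dotProduct, sq]

end Matrix.PosSemidef

section GaussianSquare

variable {v : ℝ≥0} {t : ℝ}

lemma gaussianPDFReal_mul_exp_mul_sq (hv : v ≠ 0) (x : ℝ) :
    gaussianPDFReal 0 v x * exp (t * x ^ 2) =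
      (√(2 * π * v))⁻¹ * exp (-((1 - 2 * t * v) / (2 * v)) * x ^ 2) := by
  rw [gaussianPDFReal, mul_assoc, ← exp_add]
  congr 2
  field_simp
  ring

lemma mgf_sq_gaussianReal (h : 2 * t * v < 1) :
    mgf (fun x => x ^ 2) (gaussianReal 0 v) t = (√(1 - 2 * t * v))⁻¹ := by
  rcases eq_or_ne v 0 with rfl | hv
  · simp [mgf]
  simp only [mgf, integral_gaussianReal_eq_integral_smul hv, smul_eq_mul,
    gaussianPDFReal_mul_exp_mul_sq hv, integral_const_mul, integral_gaussian]
  rw [← sqrt_inv, ← sqrt_inv, ← sqrt_mul (by positivity)]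
  congr 1
  field_simp

end GaussianSquare

lemma map_pi_gaussianReal_sum_mul {ι : Type*} [Fintype ι] (c : ι → ℝ) :
    (Measure.pi fun _ : ι => gaussianReal 0 1).map (fun y => ∑ i, c i * y i) =
      gaussianReal 0 (∑ i, c i ^ 2).toNNReal := by
  have hcomp : (fun y : ι → ℝ => ∑ i, c i * y i) =
      innerSL ℝ (WithLp.toLp 2 c : EuclideanSpace ℝ ι) ∘ WithLp.toLp 2 := by
    ext y
    simp [PiLp.inner_apply, mul_comm]
  rw [hcomp, ← Measure.map_map (by fun_prop) (by fun_prop), map_pi_eq_stdGaussian,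
    IsGaussian.map_eq_gaussianReal, integral_strongDual_stdGaussian, variance_dual_stdGaussian,
    innerSL_apply_norm, EuclideanSpace.real_norm_sq_eq]

section MultivariateGaussian

variable {N : ℕ} {S : Matrix (Fin N) (Fin N) ℝ}

instance isProbabilityMeasure_multivariateGaussian (hS : S.PosDef) :
    IsProbabilityMeasure (multivariateGaussian S hS) :=
  Measure.isProbabilityMeasure_map (by fun_prop)

lemma hasLaw_dotProduct_multivariateGaussian (hS : S.PosDef) (v : Fin N → ℝ) :
    HasLaw (· ⬝ᵥ v) (gaussianReal 0 (v ⬝ᵥ S *ᵥ v).toNNReal) (multivariateGaussian S hS) := by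
  have hcomp : (· ⬝ᵥ v) ∘ (hS.posSemidef.sqrt *ᵥ ·) =
      fun y => ∑ i, (hS.posSemidef.sqrt *ᵥ v) i * y i := by
    ext y
    rw [Function.comp_apply, dotProduct_comm, dotProduct_mulVec, ← mulVec_transpose,
      hS.posSemidef.transpose_sqrt]
    simp [dotProduct, mul_comm]
  refine ⟨by fun_prop, ?_⟩
  unfold _root_.multivariateGaussian
  rw [Measure.map_map (by fun_prop) (by fun_prop), hcomp, map_pi_gaussianReal_sum_mul,
    hS.posSemidef.sqrt_mulVec_dotProduct_self]

lemma hasLaw_dotProduct_eval_pi {K : ℕ} (hS : S.PosDef) (v : Fin N → ℝ) (i : Fin K) :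
    HasLaw (fun Z : Fin K → Fin N → ℝ => Z i ⬝ᵥ v) (gaussianReal 0 (v ⬝ᵥ S *ᵥ v).toNNReal)
      (Measure.pi fun _ => multivariateGaussian S hS) :=
  (hasLaw_dotProduct_multivariateGaussian hS v).comp
    (measurePreserving_eval (fun _ => multivariateGaussian S hS) i).hasLaw

end MultivariateGaussian

section ChiSquare

variable {Ω ι : Type*} [MeasurableSpace Ω] [Fintype ι] {P : Measure Ω}
  {Y : ι → Ω → ℝ} {σ2 : ℝ≥0} {t : ℝ}

lemma mgf_sum_sq_of_hasLaw_gaussianReal (hY : iIndepFun Y P)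
    (hlaw : ∀ i, HasLaw (Y i) (gaussianReal 0 σ2) P) (ht : 2 * t * σ2 < 1) :
    mgf (fun ω => ∑ i, Y i ω ^ 2) P t = (√(1 - 2 * t * σ2))⁻¹ ^ Fintype.card ι := by
  have hsq : iIndepFun (fun i ω => Y i ω ^ 2) P := hY.comp (fun _ x => x ^ 2) fun _ => by fun_prop
  have hmgf : ∀ i, mgf (fun ω => Y i ω ^ 2) P t = (√(1 - 2 * t * σ2))⁻¹ := fun i => by
    rw [← mgf_sq_gaussianReal ht, ← (hlaw i).map_eq, mgf_map (hlaw i).aemeasurable (by fun_prop)]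
    rfl
  have hsum : (fun ω => ∑ i, Y i ω ^ 2) = ∑ i, fun ω => Y i ω ^ 2 := (Finset.sum_fn _ _).symm
  rw [hsum, hsq.mgf_sum₀ (fun i => by fun_prop), Finset.prod_congr rfl fun i _ => hmgf i,
    Finset.prod_const, Finset.card_univ]

lemma integrable_exp_mul_sum_sq_of_hasLaw_gaussianReal (hY : iIndepFun Y P)
    (hlaw : ∀ i, HasLaw (Y i) (gaussianReal 0 σ2) P) (ht : 2 * t * σ2 < 1) :
    Integrable (fun ω => exp (t * ∑ i, Y i ω ^ 2)) P := by
  have := hY.isProbabilityMeasure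
  rw [← mgf_pos_iff, mgf_sum_sq_of_hasLaw_gaussianReal hY hlaw ht]
  have hd : 0 < 1 - 2 * t * σ2 := by linarith
  positivity

/- The Chernoff parameter `t = (1 - y) / (2σ²)` is chosen so that `1 - 2tσ² = y`. -/
lemma exp_mul_mgf_sum_sq_of_hasLaw_gaussianReal (hY : iIndepFun Y P)
    (hlaw : ∀ i, HasLaw (Y i) (gaussianReal 0 σ2) P) (hσ : σ2 ≠ 0) {y : ℝ} (hy : 0 < y) (c : ℝ) :
    exp (-((1 - y) / (2 * σ2)) * (Fintype.card ι * c * σ2)) *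
        mgf (fun ω => ∑ i, Y i ω ^ 2) P ((1 - y) / (2 * σ2)) =
      (exp (c * (y - 1) / 2) / √y) ^ Fintype.card ι := by
  have hy' : 1 - 2 * ((1 - y) / (2 * σ2)) * σ2 = y := by field_simp; ring
  rw [mgf_sum_sq_of_hasLaw_gaussianReal hY hlaw (by linarith), hy', div_pow, div_eq_mul_inv,
    ← exp_nat_mul, inv_pow]
  congr 2
  field_simp
  ring

lemma measureReal_le_sum_sq_le_of_hasLaw_gaussianReal (hY : iIndepFun Y P)
    (hlaw : ∀ i, HasLaw (Y i) (gaussianReal 0 σ2) P) (hσ : σ2 ≠ 0) {y : ℝ} (hy : 0 < y)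
    (hy1 : y ≤ 1) (c : ℝ) :
    P.real {ω | Fintype.card ι * c * σ2 ≤ ∑ i, Y i ω ^ 2} ≤
      (exp (c * (y - 1) / 2) / √y) ^ Fintype.card ι := by
  have := hY.isProbabilityMeasure
  rw [← exp_mul_mgf_sum_sq_of_hasLaw_gaussianReal hY hlaw hσ hy c]
  exact measure_ge_le_exp_mul_mgf _ (by positivity)
    (integrable_exp_mul_sum_sq_of_hasLaw_gaussianReal hY hlaw (by field_simp; linarith))

lemma measureReal_sum_sq_le_le_of_hasLaw_gaussianReal (hY : iIndepFun Y P)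
    (hlaw : ∀ i, HasLaw (Y i) (gaussianReal 0 σ2) P) (hσ : σ2 ≠ 0) {y : ℝ} (hy : 1 ≤ y)
    (c : ℝ) :
    P.real {ω | ∑ i, Y i ω ^ 2 ≤ Fintype.card ι * c * σ2} ≤
      (exp (c * (y - 1) / 2) / √y) ^ Fintype.card ι := by
  have := hY.isProbabilityMeasure
  rw [← exp_mul_mgf_sum_sq_of_hasLaw_gaussianReal hY hlaw hσ (by linarith) c]
  exact measure_le_le_exp_mul_mgf _ (div_nonpos_of_nonpos_of_nonneg (by linarith) (by positivity))
    (integrable_exp_mul_sum_sq_of_hasLaw_gaussianReal hY hlaw (by field_simp; linarith))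

end ChiSquare

section Numerics

variable {x : ℝ}

lemma le_exp_div_exp_one (x : ℝ) : x ≤ exp (x / exp 1) := by
  have h := add_one_le_exp (x / exp 1 - 1)
  rw [sub_add_cancel, exp_sub, le_div_iff₀ (exp_pos 1)] at h
  rwa [div_mul_cancel₀ _ (exp_pos 1).ne'] at h

lemma mul_exp_neg_half_pow_three_le_inv (hx : exp 1 ≤ x) :
    (x * exp (-(x / 2))) ^ 3 ≤ x⁻¹ := by
  have hx0 : 0 < x := (exp_pos 1).trans_le hx
  have he : (8 / 3 : ℝ) ≤ exp 1 := by have := exp_one_gt_d9; linarith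
  have hx4 : x ^ 4 ≤ exp (3 * x / 2) := calc
    x ^ 4 ≤ exp (x / exp 1) ^ 4 := by gcongr; exact le_exp_div_exp_one x
    _ = exp (4 * x / exp 1) := by rw [← exp_nat_mul]; ring_nf
    _ ≤ exp (3 * x / 2) := by
      refine exp_le_exp.2 ?_
      rw [div_le_div_iff₀ (exp_pos 1) two_pos]
      nlinarith
  calc (x * exp (-(x / 2))) ^ 3 = x ^ 4 * exp (-(3 * x / 2)) * x⁻¹ := by
        rw [mul_pow, ← exp_nat_mul]; field_simp; ring_nf
    _ ≤ 1 * x⁻¹ := by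
        gcongr
        rwa [exp_neg, ← div_eq_mul_inv, div_le_one (exp_pos _)]
    _ = x⁻¹ := one_mul _

lemma exp_neg_inv_pow_three_le (hx : exp 1 ≤ x) :
    exp (-(1 / (2 * x))) ^ 3 ≤ 1 - x⁻¹ := by
  have hx0 : 0 < x := (exp_pos 1).trans_le hx
  set s := 3 / (2 * x) with hs
  have hs0 : 0 < s := by positivity
  have hs1 : s ≤ 3 / 5 := by
    have := exp_one_gt_d9
    rw [hs, div_le_div_iff₀ (by positivity) (by norm_num)]
    linarith
  have hexp : exp (-(1 / (2 * x))) ^ 3 = (exp s)⁻¹ := by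
    rw [← exp_nat_mul, ← exp_neg, hs]; ring_nf
  have hinv : x⁻¹ = 2 / 3 * s := by rw [hs]; field_simp
  rw [hexp, hinv, inv_le_iff_one_le_mul₀ (exp_pos s)]
  -- `(1 - 2s/3) (1 + s + s²/2) ≥ 1` for `0 ≤ s ≤ 3/5`
  nlinarith [quadratic_le_exp_of_nonneg hs0.le]

lemma mul_exp_neg_half_pow_add_exp_neg_inv_pow_le_one (hx : exp 1 ≤ x) {K : ℕ} (hK : 3 ≤ K) :
    (x * exp (-(x / 2))) ^ K + exp (-(1 / (2 * x))) ^ K ≤ 1 := by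
  have hx0 : 0 < x := (exp_pos 1).trans_le hx
  have ha0 : 0 ≤ x * exp (-(x / 2)) := (mul_pos hx0 (exp_pos _)).le
  have ha := mul_exp_neg_half_pow_three_le_inv hx
  have hb := exp_neg_inv_pow_three_le hx
  have ha1 : x * exp (-(x / 2)) ≤ 1 := by
    refine (pow_le_one_iff_of_nonneg ha0 three_ne_zero).1 (ha.trans ?_)
    exact inv_le_one_of_one_le₀ ((one_le_exp zero_le_one).trans hx)
  have hb1 : exp (-(1 / (2 * x))) ≤ 1 :=
    exp_le_one_iff.2 (neg_nonpos.2 (one_div_nonneg.2 (by linarith)))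
  calc (x * exp (-(x / 2))) ^ K + exp (-(1 / (2 * x))) ^ K
      ≤ (x * exp (-(x / 2))) ^ 3 + exp (-(1 / (2 * x))) ^ 3 :=
        add_le_add (pow_le_pow_of_le_one ha0 ha1 hK)
          (pow_le_pow_of_le_one (by positivity) hb1 hK)
    _ ≤ 1 := by linarith

lemma chiSquare_tail_bounds_add_le {w : ℝ} (hw : √(exp 1) < w) {K : ℕ} (hK : 3 ≤ K) :
    (exp (w ^ 2 * ((w ^ 2)⁻¹ - 1) / 2) / √((w ^ 2)⁻¹)) ^ K +
        (exp ((w ^ 2)⁻¹ * (w ^ 2 - 1) / 2) / √(w ^ 2)) ^ K ≤ (√(exp 1) / w) ^ K := by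
  have hw0 : 0 < w := (sqrt_nonneg _).trans_lt hw
  have hx : exp 1 ≤ w ^ 2 := by
    rw [← sq_sqrt (exp_pos 1).le]; gcongr
  have h1 : exp (w ^ 2 * ((w ^ 2)⁻¹ - 1) / 2) / √((w ^ 2)⁻¹) =
      w ^ 2 * exp (-(w ^ 2 / 2)) * (√(exp 1) / w) := by
    have : w ^ 2 * ((w ^ 2)⁻¹ - 1) / 2 = 1 / 2 + -(w ^ 2 / 2) := by field_simp; ring
    rw [sqrt_inv, sqrt_sq hw0.le, ← exp_half, this, exp_add]
    field_simp
  have h2 : exp ((w ^ 2)⁻¹ * (w ^ 2 - 1) / 2) / √(w ^ 2) =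
      exp (-(1 / (2 * w ^ 2))) * (√(exp 1) / w) := by
    have : (w ^ 2)⁻¹ * (w ^ 2 - 1) / 2 = -(1 / (2 * w ^ 2)) + 1 / 2 := by field_simp; ring
    rw [sqrt_sq hw0.le, ← exp_half, this, exp_add, mul_div_assoc]
  rw [h1, h2, mul_pow _ (√(exp 1) / w), mul_pow _ (√(exp 1) / w), ← add_mul]
  exact mul_le_of_le_one_left (by positivity)
    (mul_exp_neg_half_pow_add_exp_neg_inv_pow_le_one hx hK)

lemma div_pow_le_of_log_div_log_le {a δ M : ℝ} {K : ℕ} (ha : 1 < a) (hδ : 0 < δ) (hM : 0 ≤ M)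
    (hK : (log M + log δ⁻¹) / log a ≤ K) : M / a ^ K ≤ δ := by
  rcases hM.eq_or_lt with rfl | hM
  · rw [zero_div]
    exact hδ.le
  have ha0 : 0 < a := one_pos.trans ha
  rw [div_le_iff₀ (log_pos ha), log_inv] at hK
  rw [div_le_iff₀ (by positivity), ← log_le_log_iff hM (by positivity), log_mul hδ.ne'
    (by positivity), log_pow]
  linarith

lemma inv_mul_sqrt_le_and_le_mul_sqrt {k w σ2 T : ℝ} (hk : 0 < k) (hw : 0 < w)
    (hupper : T < k * w ^ 2 * σ2) (hlower : k * (w ^ 2)⁻¹ * σ2 < T) :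
    w⁻¹ * √((1 / k) * T) ≤ √σ2 ∧ √σ2 ≤ w * √((1 / k) * T) := by
  have hw2 : 0 ≤ w ^ 2 := sq_nonneg w
  constructor
  · rw [inv_mul_le_iff₀ hw, ← sqrt_sq hw.le, ← sqrt_mul hw2]
    refine sqrt_le_sqrt ?_
    rw [one_div_mul_eq_div, div_le_iff₀ hk]
    linarith
  · rw [← sqrt_sq hw.le, ← sqrt_mul hw2]
    refine sqrt_le_sqrt ?_
    rw [← mul_assoc, mul_one_div, div_mul_eq_mul_div, le_div_iff₀ hk]
    rw [show k * (w ^ 2)⁻¹ * σ2 = σ2 * k / w ^ 2 by ring, div_lt_iff₀ (by positivity)] at hlower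
    linarith

end Numerics

lemma one_sub_ofReal_le_of_measureReal_compl_le {α : Type*} [MeasurableSpace α] {P : Measure α}
    [IsProbabilityMeasure P] {s : Set α} {δ : ℝ} (h : P.real sᶜ ≤ δ) :
    1 - ENNReal.ofReal δ ≤ P s := by
  rw [tsub_le_iff_right]
  calc 1 = P (s ∪ sᶜ) := by rw [Set.union_compl_self, measure_univ]
    _ ≤ P s + P sᶜ := measure_union_le _ _
    _ ≤ P s + ENNReal.ofReal δ := by
      gcongr
      rw [← ofReal_measureReal]
      exact ENNReal.ofReal_le_ofReal h

section Estimator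

variable {N K : ℕ} {S : Matrix (Fin N) (Fin N) ℝ}

noncomputable def errorEstimator (Z : Fin K → Fin N → ℝ) (v : Fin N → ℝ) : ℝ :=
  √((1 / K) * ∑ i, (Z i ⬝ᵥ v) ^ 2)

lemma setOf_not_estimator_bounds_subset (hK : 0 < K) {w : ℝ} (hw : 0 < w) (v : Fin N → ℝ)
    (σ2 : ℝ) :
    {Z : Fin K → Fin N → ℝ | ¬(w⁻¹ * errorEstimator Z v ≤ √σ2 ∧ √σ2 ≤ w * errorEstimator Z v)} ⊆
      {Z | K * w ^ 2 * σ2 ≤ ∑ i, (Z i ⬝ᵥ v) ^ 2} ∪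
        {Z | ∑ i, (Z i ⬝ᵥ v) ^ 2 ≤ K * (w ^ 2)⁻¹ * σ2} := by
  intro Z hZ
  by_contra hmem
  simp only [Set.mem_union, Set.mem_ofPred_eq, not_or, not_le] at hmem
  exact hZ (inv_mul_sqrt_le_and_le_mul_sqrt (by exact_mod_cast hK) hw hmem.1 hmem.2)

lemma measureReal_not_estimator_bounds_le (hS : S.PosDef) (v : Fin N → ℝ) (hK : 3 ≤ K)
    {w : ℝ} (hw : √(exp 1) < w) :
    (Measure.pi fun _ : Fin K => multivariateGaussian S hS).real
        {Z | ¬(w⁻¹ * errorEstimator Z v ≤ sigmaNorm S v ∧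
          sigmaNorm S v ≤ w * errorEstimator Z v)} ≤ (√(exp 1) / w) ^ K := by
  have hw0 : 0 < w := (sqrt_nonneg _).trans_lt hw
  rcases eq_or_ne v 0 with rfl | hv
  · simpa [errorEstimator, sigmaNorm] using pow_nonneg (div_nonneg (sqrt_nonneg _) hw0.le) K
  set σ2 := (v ⬝ᵥ S *ᵥ v).toNNReal
  have hσpos : 0 < v ⬝ᵥ S *ᵥ v := hS.dotProduct_mulVec_pos hv
  have hσ : σ2 ≠ 0 := by simpa [σ2] using hσpos
  have hnorm : sigmaNorm S v = √σ2 := by simp [sigmaNorm, σ2, hσpos.le]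
  have hY := iIndepFun_pi (X := fun (_ : Fin K) z => z ⬝ᵥ v)
    (μ := fun _ => multivariateGaussian S hS) fun _ => by fun_prop
  have hlaw := hasLaw_dotProduct_eval_pi (K := K) hS v
  have hw1 : 1 ≤ w ^ 2 := one_le_pow₀ ((one_le_sqrt.2 (one_le_exp zero_le_one)).trans hw.le)
  have hupper := measureReal_le_sum_sq_le_of_hasLaw_gaussianReal hY hlaw hσ (by positivity)
    (inv_le_one_of_one_le₀ hw1) (w ^ 2)
  have hlower := measureReal_sum_sq_le_le_of_hasLaw_gaussianReal hY hlaw hσ hw1 (w ^ 2)⁻¹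
  rw [Fintype.card_fin] at hupper hlower
  rw [hnorm]
  refine (measureReal_mono (setOf_not_estimator_bounds_subset (by omega) hw0 v σ2)).trans
    ((measureReal_union_le _ _).trans ((add_le_add hupper hlower).trans ?_))
  exact chiSquare_tail_bounds_add_le hw hK

end Estimator

theorem randomized_error_estimator_finite_parameter_set_general {N : ℕ}
    (S : Matrix (Fin N) (Fin N) ℝ) (hS : S.PosDef)
    {ι : Type*} [Fintype ι]
    (u : ι → Fin N → ℝ) (util : ι → Fin N → ℝ)
    (δ : ℝ) (hδ0 : 0 < δ)
    (w : ℝ) (hw : Real.sqrt (Real.exp 1) < w)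
    (K : ℕ) (hK3 : 3 ≤ K)
    (hK : (Real.log (Fintype.card ι) + Real.log δ⁻¹)
            / Real.log (w / Real.sqrt (Real.exp 1)) ≤ K)
    (Δ : (Fin K → Fin N → ℝ) → ι → ℝ)
    (hΔ : ∀ Z μ, Δ Z μ = Real.sqrt ((1 / K) * ∑ i, (Z i ⬝ᵥ (u μ - util μ)) ^ 2)) :
    1 - ENNReal.ofReal δ ≤
      (Measure.pi fun _ : Fin K => multivariateGaussian S hS)
        {Z | ∀ μ : ι, w⁻¹ * Δ Z μ ≤ sigmaNorm S (u μ - util μ) ∧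
             sigmaNorm S (u μ - util μ) ≤ w * Δ Z μ} := by
  obtain rfl : Δ = fun Z μ => errorEstimator Z (u μ - util μ) := funext₂ hΔ
  set P := Measure.pi fun _ : Fin K => multivariateGaussian S hS
  apply one_sub_ofReal_le_of_measureReal_compl_le
  have hratio : 1 < w / √(exp 1) := (one_lt_div (sqrt_pos.2 (exp_pos 1))).2 hw
  rw [Set.ofPred_forall, Set.compl_iInter]
  calc P.real _ ≤ ∑ μ : ι, P.real _ := measureReal_iUnion_fintype_le _
    _ ≤ ∑ _μ : ι, (√(exp 1) / w) ^ K := Finset.sum_le_sum fun μ _ => by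
      rw [Set.compl_ofPred]
      exact measureReal_not_estimator_bounds_le hS (u μ - util μ) hK3 hw
    _ = Fintype.card ι / (w / √(exp 1)) ^ K := by
      rw [Finset.sum_const, Finset.card_univ, nsmul_eq_mul, ← inv_div, inv_pow, ← div_eq_mul_inv]
    _ ≤ δ := div_pow_le_of_log_div_log_le hratio hδ0 (Nat.cast_nonneg _) hK

theorem randomized_error_estimator_finite_parameter_set {N : ℕ}
    (S : Matrix (Fin N) (Fin N) ℝ) (hS : S.PosDef)
    {ι : Type*} [Fintype ι] [Nonempty ι]
    (u : ι → Fin N → ℝ) (util : ι → Fin N → ℝ)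
    (δ : ℝ) (hδ0 : 0 < δ) (hδ1 : δ < 1)
    (w : ℝ) (hw : Real.sqrt (Real.exp 1) < w)
    (K : ℕ) (hK3 : 3 ≤ K)
    (hK : (Real.log (Fintype.card ι) + Real.log δ⁻¹)
            / Real.log (w / Real.sqrt (Real.exp 1)) ≤ K)
    (Δ : (Fin K → Fin N → ℝ) → ι → ℝ)
    (hΔ : ∀ Z μ, Δ Z μ = Real.sqrt ((1 / K) * ∑ i, (Z i ⬝ᵥ (u μ - util μ)) ^ 2)) :
    1 - ENNReal.ofReal δ ≤
      (Measure.pi fun _ : Fin K => multivariateGaussian S hS)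
        {Z | ∀ μ : ι, w⁻¹ * Δ Z μ ≤ sigmaNorm S (u μ - util μ) ∧
             sigmaNorm S (u μ - util μ) ≤ w * Δ Z μ} :=
  randomized_error_estimator_finite_parameter_set_general S hS u util δ hδ0 w hw K hK3 hK Δ hΔ
end

section
/- Let A ∈ ℝ^{N×N} be invertible, let Σ ∈ ℝ^{N×N} be symmetric positive definite, let f ∈ ℝ^N, u = A⁻¹f, and let ũ ∈ ℝ^N with r = f − Aũ. Let Z₁,…,Z_K ∈ ℝ^N be arbitrary vectors, let Y_i = A⁻ᵀZ_i be the exact dual solutions, and let Ỹ₁,…,Ỹ_K ∈ ℝ^N be arbitrary approximate dual solutions. Define Δ = √( (1/K) ∑_{i=1}^K (Y_iᵀ r)² ) and Δ̃ = √( (1/K) ∑_{i=1}^K (Ỹ_iᵀ r)² ). Then |Δ − Δ̃| ≤ ( max_{1≤i≤K} ‖AᵀỸ_i − Z_i‖_{Σ⁻¹} ) · ‖u − ũ‖_Σ. -/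
/-!
Since `r = A (u - ũ)`, each dual residual gap is `Ỹᵢᵀr - Yᵢᵀr = (AᵀỸᵢ - Zᵢ)ᵀ(u - ũ)`, which
Cauchy–Schwarz in the `Σ`-inner product bounds by `‖AᵀỸᵢ - Zᵢ‖_{Σ⁻¹} ‖u - ũ‖_Σ`. The estimators
`Δ` and `Δ̃` are root mean squares, i.e. rescaled Euclidean norms, so the reverse triangle
inequality bounds `|Δ - Δ̃|` by the root mean square of the gaps, hence by their maximum.
-/

open Matrix

section WeightedCauchySchwarz

variable {n : Type*} [Fintype n]

lemma Matrix.PosSemidef.sq_dotProduct_mulVec_le {S : Matrix n n ℝ} (hS : S.PosSemidef)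
    (x y : n → ℝ) : (x ⬝ᵥ S *ᵥ y) ^ 2 ≤ (x ⬝ᵥ S *ᵥ x) * (y ⬝ᵥ S *ᵥ y) := by
  let := S.toSeminormedAddCommGroup hS
  let := S.toInnerProductSpace hS
  have hinner (a b : n → ℝ) : inner ℝ a b = a ⬝ᵥ S *ᵥ b := dotProduct_comm _ _
  simpa only [hinner, sq] using real_inner_mul_inner_self_le x y

/-- Cauchy–Schwarz for the `S`-inner product, applied to `S⁻¹ w` and `e`. -/
lemma Matrix.PosDef.abs_dotProduct_le_sqrt_mul_sqrt [DecidableEq n] {S : Matrix n n ℝ}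
    (hS : S.PosDef) (w e : n → ℝ) :
    |w ⬝ᵥ e| ≤ √(w ⬝ᵥ S⁻¹ *ᵥ w) * √(e ⬝ᵥ S *ᵥ e) := by
  have hSw : S *ᵥ S⁻¹ *ᵥ w = w := by
    rw [mulVec_mulVec, S.mul_nonsing_inv (S.isUnit_iff_isUnit_det.mp hS.isUnit), one_mulVec]
  have hcross : S⁻¹ *ᵥ w ⬝ᵥ S *ᵥ e = w ⬝ᵥ e := by
    rw [dotProduct_mulVec, ← mulVec_transpose, (isHermitian_iff_isSymm.mp hS.isHermitian).eq,
      hSw]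
  have hdiag : S⁻¹ *ᵥ w ⬝ᵥ S *ᵥ S⁻¹ *ᵥ w = w ⬝ᵥ S⁻¹ *ᵥ w := by
    rw [hSw, dotProduct_comm]
  rw [← Real.sqrt_mul (hdiag ▸ hS.posSemidef.dotProduct_mulVec_nonneg _),
    ← Real.sqrt_sq_eq_abs, ← hcross, ← hdiag]
  exact Real.sqrt_le_sqrt (hS.posSemidef.sq_dotProduct_mulVec_le _ _)

end WeightedCauchySchwarz

lemma Matrix.inv_transpose_mulVec_dotProduct_mulVec {n R : Type*} [Fintype n] [DecidableEq n]
    [CommRing R] {A : Matrix n n R} (hA : IsUnit A.det) (z e : n → R) :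
    (Aᵀ)⁻¹ *ᵥ z ⬝ᵥ A *ᵥ e = z ⬝ᵥ e := by
  rw [dotProduct_mulVec, ← mulVec_transpose, mulVec_mulVec,
    Aᵀ.mul_nonsing_inv (by rwa [det_transpose]), one_mulVec]

section RootMeanSquare

variable {ι : Type*} [Fintype ι]

noncomputable def rootMeanSquare (a : ι → ℝ) : ℝ :=
  √((1 / Fintype.card ι : ℝ) * ∑ i, a i ^ 2)

lemma rootMeanSquare_eq_norm_div (a : ι → ℝ) :
    rootMeanSquare a = ‖(WithLp.toLp 2 a : EuclideanSpace ℝ ι)‖ / √(Fintype.card ι) := by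
  simp only [rootMeanSquare, EuclideanSpace.norm_eq, Real.norm_eq_abs, sq_abs, one_div_mul_eq_div,
    Real.sqrt_div' _ (Nat.cast_nonneg _)]

lemma abs_rootMeanSquare_sub_le (a b : ι → ℝ) :
    |rootMeanSquare a - rootMeanSquare b| ≤ rootMeanSquare (a - b) := by
  simp only [rootMeanSquare_eq_norm_div, ← sub_div, abs_div, abs_of_nonneg (Real.sqrt_nonneg _),
    WithLp.toLp_sub]
  exact div_le_div_of_nonneg_right (abs_norm_sub_norm_le _ _) (Real.sqrt_nonneg _)

lemma rootMeanSquare_le_of_forall_abs_le [Nonempty ι] {a : ι → ℝ} {C : ℝ}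
    (h : ∀ i, |a i| ≤ C) : rootMeanSquare a ≤ C := by
  have hC : 0 ≤ C := (abs_nonneg _).trans (h (Classical.arbitrary ι))
  calc rootMeanSquare a ≤ √((1 / Fintype.card ι : ℝ) * ∑ _i : ι, C ^ 2) := by
        unfold rootMeanSquare
        gcongr √(_ * ∑ i, ?_) with i
        exact sq_le_sq.mpr ((h i).trans (le_abs_self C))
    _ = C := by
        rw [Finset.sum_const, Finset.card_univ, nsmul_eq_mul, ← mul_assoc,
          one_div_mul_cancel (Nat.cast_ne_zero.mpr Fintype.card_ne_zero), one_mul,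
          Real.sqrt_sq hC]

end RootMeanSquare

theorem error_estimator_dual_residual_bound {N K : ℕ} [NeZero K]
    (A : Matrix (Fin N) (Fin N) ℝ) (hA : IsUnit A.det)
    (S : Matrix (Fin N) (Fin N) ℝ) (hS : S.PosDef)
    (f : Fin N → ℝ) (util : Fin N → ℝ)
    (u : Fin N → ℝ) (hu : u = A⁻¹.mulVec f)
    (r : Fin N → ℝ) (hr : r = f - A.mulVec util)
    (Z : Fin K → Fin N → ℝ)
    (Y : Fin K → Fin N → ℝ) (hY : ∀ i, Y i = (Aᵀ)⁻¹.mulVec (Z i))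
    (Ytil : Fin K → Fin N → ℝ)
    (Δ : ℝ) (hΔ : Δ = Real.sqrt ((1 / K : ℝ) * ∑ i, (Y i ⬝ᵥ r) ^ 2))
    (Δtil : ℝ) (hΔtil : Δtil = Real.sqrt ((1 / K : ℝ) * ∑ i, (Ytil i ⬝ᵥ r) ^ 2)) :
    |Δ - Δtil| ≤
      (Finset.univ.sup' Finset.univ_nonempty fun i =>
          Real.sqrt ((Aᵀ.mulVec (Ytil i) - Z i) ⬝ᵥ S⁻¹.mulVec (Aᵀ.mulVec (Ytil i) - Z i)))
        * Real.sqrt ((u - util) ⬝ᵥ S.mulVec (u - util)) := by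
  have hr_eq : r = A *ᵥ (u - util) := by
    rw [hr, hu, mulVec_sub, mulVec_mulVec, A.mul_nonsing_inv hA, one_mulVec]
  have hgap (i : Fin K) : Ytil i ⬝ᵥ r - Y i ⬝ᵥ r = (Aᵀ *ᵥ Ytil i - Z i) ⬝ᵥ (u - util) := by
    rw [hr_eq, hY, inv_transpose_mulVec_dotProduct_mulVec hA, dotProduct_mulVec,
      ← mulVec_transpose, sub_dotProduct]
  have hrms (W : Fin K → Fin N → ℝ) :
      √((1 / K : ℝ) * ∑ i, (W i ⬝ᵥ r) ^ 2) = rootMeanSquare fun i => W i ⬝ᵥ r := by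
    rw [rootMeanSquare, Fintype.card_fin]
  rw [hΔ, hΔtil, hrms, hrms, abs_sub_comm]
  refine (abs_rootMeanSquare_sub_le _ _).trans (rootMeanSquare_le_of_forall_abs_le fun i => ?_)
  rw [Pi.sub_apply, hgap]
  refine (hS.abs_dotProduct_le_sqrt_mul_sqrt _ _).trans ?_
  gcongr
  exact Finset.le_sup' (fun j => √((Aᵀ *ᵥ Ytil j - Z j) ⬝ᵥ S⁻¹ *ᵥ (Aᵀ *ᵥ Ytil j - Z j)))
    (Finset.mem_univ i)
end

section
/- Let A ∈ ℝ^{N×N}, let r ∈ ℝ^N, let Z₁,…,Z_K ∈ ℝ^N, and let 𝒴 ⊆ ℝ^N be a linear subspace. Suppose Ỹ₁,…,Ỹ_K ∈ 𝒴 are Galerkin solutions of the dual problems, i.e. vᵀ(AᵀỸ_i) = vᵀZ_i for all v ∈ 𝒴 and all 1 ≤ i ≤ K, and suppose ẽ ∈ 𝒴 is a Galerkin solution of the error equation, i.e. vᵀ(Aẽ) = vᵀr for all v ∈ 𝒴. Then Ỹ_iᵀ r = Z_iᵀ ẽ for every 1 ≤ i ≤ K, and consequently √( (1/K) ∑_{i=1}^K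 (Ỹ_iᵀ r)² ) = √( (1/K) ∑_{i=1}^K (Z_iᵀ ẽ)² ). -/
open Matrix

theorem Matrix.dotProduct_eq_of_galerkin {R n : Type*} [CommSemiring R] [Fintype n]
    (A : Matrix n n R) {Y : Submodule R (n → R)} {y e r z : n → R} (hy : y ∈ Y) (he : e ∈ Y)
    (hyGal : ∀ v ∈ Y, v ⬝ᵥ Aᵀ *ᵥ y = v ⬝ᵥ z) (heGal : ∀ v ∈ Y, v ⬝ᵥ A *ᵥ e = v ⬝ᵥ r) :
    y ⬝ᵥ r = z ⬝ᵥ e :=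
  calc y ⬝ᵥ r = y ⬝ᵥ A *ᵥ e := (heGal y hy).symm
    _ = e ⬝ᵥ Aᵀ *ᵥ y := by rw [dotProduct_mulVec, ← mulVec_transpose, dotProduct_comm]
    _ = z ⬝ᵥ e := by rw [hyGal e he, dotProduct_comm]

theorem galerkin_dual_primal_duality {N K : ℕ}
    (A : Matrix (Fin N) (Fin N) ℝ) (r : Fin N → ℝ)
    (Z : Fin K → Fin N → ℝ)
    (Y : Submodule ℝ (Fin N → ℝ))
    (Ytil : Fin K → Fin N → ℝ) (hYtilMem : ∀ i, Ytil i ∈ Y)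
    (hYtilGal : ∀ i, ∀ v ∈ Y, v ⬝ᵥ Aᵀ.mulVec (Ytil i) = v ⬝ᵥ Z i)
    (etil : Fin N → ℝ) (hetilMem : etil ∈ Y)
    (hetilGal : ∀ v ∈ Y, v ⬝ᵥ A.mulVec etil = v ⬝ᵥ r) :
    (∀ i, Ytil i ⬝ᵥ r = Z i ⬝ᵥ etil) ∧
      Real.sqrt ((1 / K : ℝ) * ∑ i, (Ytil i ⬝ᵥ r) ^ 2)
        = Real.sqrt ((1 / K : ℝ) * ∑ i, (Z i ⬝ᵥ etil) ^ 2) := by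
  have hdual (i : Fin K) : Ytil i ⬝ᵥ r = Z i ⬝ᵥ etil :=
    A.dotProduct_eq_of_galerkin (hYtilMem i) hetilMem (hYtilGal i) hetilGal
  exact ⟨hdual, by simp only [hdual]⟩
end
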